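/- arXiv:2604.27404 — 3 statements merged into one kernel-verified Lean document; each statement's English description precedes it below -/
import Mathlib

section
/- Let (X, μ) be a probability space and p : X × X → ℝ a measurable kernel satisfying p(x,y) ≥ c > 0 for all x, y and ∫ p(x,y) dμ(y) = 1 for all x. Then for every g ∈ L¹(μ) with ∫ g dμ = 0, the transfer operator L satisfies ‖L g‖₁ ≤ (1 − c) ‖g‖₁. -/
open MeasureTheory

/-- If the kernel satisfies a uniform lower bound `p ≥ c > 0` and is
normalized, then the transfer operator contracts the zero-average subspace of `L¹`
with factor `1 - c`. -/
theorem transfer_operator_contracts_zero_average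
    {X : Type*} [MeasurableSpace X] (μ : Measure X) [IsProbabilityMeasure μ]
    (p : X × X → ℝ) (hmeas : Measurable p)
    (c : ℝ) (hc : 0 < c) (hlow : ∀ x y, c ≤ p (x, y))
    (hnorm : ∀ x, ∫ y, p (x, y) ∂μ = 1)
    (g : X → ℝ) (hg : Integrable g μ) (hzero : ∫ x, g x ∂μ = 0) :
    ∫ y, |∫ x, p (x, y) * g x ∂μ| ∂μ ≤ (1 - c) * ∫ x, |g x| ∂μ := by
  -- p(x, ·) is integrable for each x (otherwise its integral would be 0, not 1)
  have hpInt : ∀ x, Integrable (fun y => p (x, y)) μ := by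
    intro x
    by_contra h
    have h1 := hnorm x
    rw [integral_undef h] at h1
    norm_num at h1
  -- the inner integrand computation
  have hinner : ∀ x, (∫ y, (p (x, y) - c) * |g x| ∂μ) = (1 - c) * |g x| := by
    intro x
    rw [integral_mul_const, integral_sub (hpInt x) (integrable_const c), hnorm x]
    simp
  -- measurability of the product function
  have hgfst : AEStronglyMeasurable (fun q : X × X => |g q.1|) (μ.prod μ) :=
    (hg.abs.1).comp_quasiMeasurePreserving Measure.quasiMeasurePreserving_fst
  have hFmeas : AEStronglyMeasurable (fun q : X × X => (p q - c) * |g q.1|) (μ.prod μ) :=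
    ((hmeas.sub measurable_const).aestronglyMeasurable).mul hgfst
  -- integrability of F on the product space
  have hFint : Integrable (fun q : X × X => (p q - c) * |g q.1|) (μ.prod μ) := by
    rw [MeasureTheory.integrable_prod_iff hFmeas]
    constructor
    · refine Filter.Eventually.of_forall fun x => ?_
      have h0 := ((hpInt x).sub (integrable_const c)).mul_const |g x|
      exact h0.congr (Filter.Eventually.of_forall fun y => by simp)
    · have hnormeq : ∀ x, (∫ y, ‖(p (x, y) - c) * |g x|‖ ∂μ) = (1 - c) * |g x| := by
        intro x
        have h1 : ∀ y, ‖(p (x, y) - c) * |g x|‖ = (p (x, y) - c) * |g x| := by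
          intro y
          rw [Real.norm_eq_abs, abs_mul, abs_abs, abs_of_nonneg (sub_nonneg.2 (hlow x y))]
        simp only [h1]
        exact hinner x
      simp only [hnormeq]
      exact hg.abs.const_mul _
  -- pointwise bound
  have hbound : ∀ y, |∫ x, p (x, y) * g x ∂μ| ≤ ∫ x, (p (x, y) - c) * |g x| ∂μ := by
    intro y
    by_cases hint : Integrable (fun x => (p (x, y) - c) * |g x|) μ
    · -- then (p-c)*g is integrable (same norm), and p*g = (p-c)*g + c*g
      have hint2 : Integrable (fun x => (p (x, y) - c) * g x) μ := by
        refine hint.mono ?_ (Filter.Eventually.of_forall fun x => ?_)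
        · exact ((hmeas.comp (measurable_prodMk_right)).sub measurable_const
            ).aestronglyMeasurable.mul hg.1
        · rw [Real.norm_eq_abs, Real.norm_eq_abs, abs_mul, abs_mul, abs_abs]
      have hint3 : Integrable (fun x => p (x, y) * g x) μ := by
        have := hint2.add (hg.const_mul c)
        refine this.congr (Filter.Eventually.of_forall fun x => ?_)
        simp only [Pi.add_apply]; ring
      have heq : ∫ x, p (x, y) * g x ∂μ = ∫ x, (p (x, y) - c) * g x ∂μ := by
        have : ∫ x, (p (x, y) - c) * g x ∂μ
            = ∫ x, p (x, y) * g x ∂μ - ∫ x, c * g x ∂μ := by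
          rw [← integral_sub hint3 (hg.const_mul c)]
          congr 1; funext x; ring
        rw [this, integral_const_mul, hzero]
        ring
      rw [heq]
      calc |∫ x, (p (x, y) - c) * g x ∂μ| ≤ ∫ x, |(p (x, y) - c) * g x| ∂μ :=
            by simpa only [Real.norm_eq_abs] using
              norm_integral_le_integral_norm (μ := μ) (fun x => (p (x, y) - c) * g x)
        _ = ∫ x, (p (x, y) - c) * |g x| ∂μ := by
            congr 1; funext x
            rw [abs_mul, abs_of_nonneg (sub_nonneg.2 (hlow x y))]
    · -- both integrals are zero
      have hint3 : ¬ Integrable (fun x => p (x, y) * g x) μ := by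
        intro h
        apply hint
        have h2 : Integrable (fun x => (p (x, y) - c) * g x) μ := by
          have := h.sub (hg.const_mul c)
          refine this.congr (Filter.Eventually.of_forall fun x => ?_)
          simp only [Pi.sub_apply]; ring
        refine h2.mono ?_ (Filter.Eventually.of_forall fun x => ?_)
        · exact ((hmeas.comp (measurable_prodMk_right)).sub measurable_const
            ).aestronglyMeasurable.mul hg.abs.1
        · rw [Real.norm_eq_abs, Real.norm_eq_abs, abs_mul, abs_mul, abs_abs]
      rw [integral_undef hint3, integral_undef hint]
      simp
  -- put everything together
  calc ∫ y, |∫ x, p (x, y) * g x ∂μ| ∂μ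
      ≤ ∫ y, ∫ x, (p (x, y) - c) * |g x| ∂μ ∂μ := by
        refine integral_mono_of_nonneg (Filter.Eventually.of_forall fun y => abs_nonneg _)
          hFint.integral_prod_right (Filter.Eventually.of_forall hbound)
    _ = ∫ x, ∫ y, (p (x, y) - c) * |g x| ∂μ ∂μ := (integral_integral_swap hFint).symm
    _ = ∫ x, (1 - c) * |g x| ∂μ := by simp only [hinner]
    _ = (1 - c) * ∫ x, |g x| ∂μ := integral_const_mul _ _
end

section
/- Let X be a Banach space, V ⊆ X a closed subspace, and suppose: (a) (Id − L₀)^{-1} is a bounded operator on V; (b) f_δ − f₀ ∈ V with f_δ → f₀ in X as δ → 0; (c) the difference quotients (L_δ − L₀)/δ are uniformly bounded in operator norm for small δ > 0; (d) (L_δ − L₀) f₀ / δ → ṙ in X as δ → 0, with ṙ ∈ V and (L_δ − L₀) f_δ / δ ∈ V. Then (f_δ − f₀)/δ → (Id − L₀)^{-1} ṙ as δ → 0, where L₀ f₀ = f₀ and L_δ f_δ = f_δ. -/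
/-!
Subtracting the fixed-point equations `L₀ f₀ = f₀` and `L_δ f_δ = f_δ` gives
`(Id - L₀)(f_δ - f₀) = (L_δ - L₀) f_δ`, so `(f_δ - f₀)/δ = (Id - L₀)⁻¹ ((L_δ - L₀) f_δ / δ)`.
Splitting `f_δ = f₀ + (f_δ - f₀)`, the quotient `(L_δ - L₀) f_δ / δ` tends to `ṙ`, because the
uniform bound `‖L_δ - L₀‖ ≤ M δ` makes `(L_δ - L₀)(f_δ - f₀) / δ` of size `M ‖f_δ - f₀‖ → 0`.
-/

open Filter Topology

namespace ContinuousLinearMap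

theorem one_sub_apply_sub_eq_sub_apply_of_fixed {R M : Type*} [Ring R] [AddCommGroup M]
    [Module R M] [TopologicalSpace M] [IsTopologicalAddGroup M] {T₀ T : M →L[R] M} {x₀ x : M}
    (hx₀ : T₀ x₀ = x₀) (hx : T x = x) : (1 - T₀) (x - x₀) = (T - T₀) x := by
  simp only [sub_apply, one_apply_eq_self, map_sub, hx₀, hx]
  abel

end ContinuousLinearMap

section DifferenceQuotient

variable {E F : Type*} [NormedAddCommGroup E] [NormedSpace ℝ E]
  [NormedAddCommGroup F] [NormedSpace ℝ F]
  {l : Filter ℝ} {A : ℝ → E →L[ℝ] F} {M : ℝ}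

theorem tendsto_inv_smul_apply_zero (hpos : ∀ᶠ δ in l, 0 < δ)
    (hA : ∀ᶠ δ in l, ‖A δ‖ ≤ M * δ) {g : ℝ → E} (hg : Tendsto g l (𝓝 0)) :
    Tendsto (fun δ => δ⁻¹ • A δ (g δ)) l (𝓝 0) := by
  have hbound : ∀ᶠ δ in l, ‖δ⁻¹ • A δ (g δ)‖ ≤ M * ‖g δ‖ := by
    filter_upwards [hpos, hA] with δ hδ hAδ
    calc ‖δ⁻¹ • A δ (g δ)‖ = δ⁻¹ * ‖A δ (g δ)‖ := by
          rw [norm_smul, norm_inv, Real.norm_of_nonneg hδ.le]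
      _ ≤ δ⁻¹ * (M * δ * ‖g δ‖) := by
          gcongr
          exact (A δ).le_of_opNorm_le hAδ _
      _ = M * ‖g δ‖ := by field_simp
  refine squeeze_zero_norm' hbound ?_
  simpa using hg.norm.const_mul M

theorem tendsto_inv_smul_apply_of_tendsto (hpos : ∀ᶠ δ in l, 0 < δ)
    (hA : ∀ᶠ δ in l, ‖A δ‖ ≤ M * δ) {x : ℝ → E} {x₀ : E} (hx : Tendsto x l (𝓝 x₀)) {r : F}
    (hr : Tendsto (fun δ => δ⁻¹ • A δ x₀) l (𝓝 r)) :
    Tendsto (fun δ => δ⁻¹ • A δ (x δ)) l (𝓝 r) := by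
  have hsmall := tendsto_inv_smul_apply_zero hpos hA (g := fun δ => x δ - x₀)
    (by simpa using hx.sub_const x₀)
  simpa [← smul_add, ← map_add] using hr.add hsmall

end DifferenceQuotient

theorem linear_response_formula_general
    {X : Type*} [NormedAddCommGroup X] [NormedSpace ℝ X]
    (V : Submodule ℝ X)
    (L : ℝ → (X →L[ℝ] X)) (f : ℝ → X) (δ₀ : ℝ) (hδ₀ : 0 < δ₀)
    (hfix : ∀ δ ∈ Set.Ico (0 : ℝ) δ₀, L δ (f δ) = f δ)
    -- (a) (Id - L 0)⁻¹ is a bounded operator on V, realized by `Res`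
    (Res : X →L[ℝ] X)
    (hRes : ∀ g ∈ V, Res g ∈ V ∧
      ((1 : X →L[ℝ] X) - L 0) (Res g) = g ∧ Res (((1 : X →L[ℝ] X) - L 0) g) = g)
    -- (b) f_δ - f₀ ∈ V and f_δ → f₀
    (hdiffV : ∀ δ ∈ Set.Ico (0 : ℝ) δ₀, f δ - f 0 ∈ V)
    (hfconv : Tendsto f (nhdsWithin 0 (Set.Ioi (0 : ℝ))) (nhds (f 0)))
    -- (c) uniform bound on the difference quotients
    (M : ℝ) (hM : ∀ δ ∈ Set.Ioo (0 : ℝ) δ₀, ‖L δ - L 0‖ ≤ M * δ)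
    -- (d) first-order expansion on f₀, with values in V
    (rdot : X)
    (hrconv : Tendsto (fun δ : ℝ => δ⁻¹ • ((L δ - L 0) (f 0)))
      (nhdsWithin 0 (Set.Ioi (0 : ℝ))) (nhds rdot)) :
    Tendsto (fun δ : ℝ => δ⁻¹ • (f δ - f 0))
      (nhdsWithin 0 (Set.Ioi (0 : ℝ))) (nhds (Res rdot)) := by
  have hIoo : ∀ᶠ δ in 𝓝[>] (0 : ℝ), δ ∈ Set.Ioo 0 δ₀ :=
    Ioo_mem_nhdsGT_of_mem ⟨le_rfl, hδ₀⟩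
  have hquot : Tendsto (fun δ => δ⁻¹ • (L δ - L 0) (f δ)) (𝓝[>] 0) (𝓝 rdot) :=
    tendsto_inv_smul_apply_of_tendsto self_mem_nhdsWithin (hIoo.mono hM) hfconv hrconv
  refine ((Res.continuous.tendsto rdot).comp hquot).congr' ?_
  filter_upwards [hIoo] with δ hδ
  have hδ' : δ ∈ Set.Ico 0 δ₀ := Set.Ioo_subset_Ico_self hδ
  have hlin := ContinuousLinearMap.one_sub_apply_sub_eq_sub_apply_of_fixed
    (hfix 0 ⟨le_rfl, hδ₀⟩) (hfix δ hδ')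
  simp only [Function.comp_apply, map_smul, ← hlin, (hRes _ (hdiffV δ hδ')).2.2]

/-- Abstract linear response formula. Under boundedness of the
resolvent `(Id - L₀)⁻¹` on a closed subspace `V`, convergence `f_δ → f₀`,
uniform boundedness of the difference quotients `(L_δ - L₀)/δ`, and convergence
`(L_δ - L₀) f₀ / δ → ṙ ∈ V`, one has `(f_δ - f₀)/δ → (Id - L₀)⁻¹ ṙ`. -/
theorem linear_response_formula
    {X : Type*} [NormedAddCommGroup X] [NormedSpace ℝ X]
    (V : Submodule ℝ X) (hVclosed : IsClosed (V : Set X))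
    (L : ℝ → (X →L[ℝ] X)) (f : ℝ → X) (δ₀ : ℝ) (hδ₀ : 0 < δ₀)
    (hfix : ∀ δ ∈ Set.Ico (0 : ℝ) δ₀, L δ (f δ) = f δ)
    -- (a) (Id - L 0)⁻¹ is a bounded operator on V, realized by `Res`
    (Res : X →L[ℝ] X)
    (hRes : ∀ g ∈ V, Res g ∈ V ∧
      ((1 : X →L[ℝ] X) - L 0) (Res g) = g ∧ Res (((1 : X →L[ℝ] X) - L 0) g) = g)
    -- (b) f_δ - f₀ ∈ V and f_δ → f₀
    (hdiffV : ∀ δ ∈ Set.Ico (0 : ℝ) δ₀, f δ - f 0 ∈ V)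
    (hfconv : Tendsto f (nhdsWithin 0 (Set.Ioi (0 : ℝ))) (nhds (f 0)))
    -- (c) uniform bound on the difference quotients
    (M : ℝ) (hM : ∀ δ ∈ Set.Ioo (0 : ℝ) δ₀, ‖L δ - L 0‖ ≤ M * δ)
    -- (d) first-order expansion on f₀, with values in V
    (rdot : X) (hrdotV : rdot ∈ V)
    (hquotV : ∀ δ ∈ Set.Ioo (0 : ℝ) δ₀, (L δ - L 0) (f δ) ∈ V)
    (hrconv : Tendsto (fun δ : ℝ => δ⁻¹ • ((L δ - L 0) (f 0)))
      (nhdsWithin 0 (Set.Ioi (0 : ℝ))) (nhds rdot)) :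
    Tendsto (fun δ : ℝ => δ⁻¹ • (f δ - f 0))
      (nhdsWithin 0 (Set.Ioi (0 : ℝ))) (nhds (Res rdot)) :=
  linear_response_formula_general V L f δ₀ hδ₀ hfix Res hRes hdiffV hfconv M hM rdot hrconv
end

section
/- Fractional Grönwall inequality: let α, β ∈ [0,1), A, B > 0, T > 0, and let u : (0,T) → [0,∞) be measurable with t ↦ t^β u(t) locally bounded. If u(t) ≤ A t^{−β} + B ∫₀ᵗ (t−s)^{−α} u(s) ds for a.e. t ∈ (0,T), then there exists a constant c depending only on α, β, B, T such that u(t) ≤ c A t^{−β} for a.e. t ∈ (0,T). -/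
open MeasureTheory Set


lemma FG.integrableOn_rpow {r : ℝ} (hr : -1 < r) {a b : ℝ} (hab : a ≤ b) :
    IntegrableOn (fun s : ℝ => s ^ r) (Ioo a b) volume := by
  have h := (intervalIntegral.intervalIntegrable_rpow' (a := a) (b := b) hr)
  rw [intervalIntegrable_iff, uIoc_of_le hab] at h
  exact h.mono_set Ioo_subset_Ioc_self

open intervalIntegral in
lemma FG.integral_rpow_Ioo {r : ℝ} (hr : -1 < r) {b : ℝ} (hb : 0 ≤ b) :
    ∫ s in Ioo (0:ℝ) b, s ^ r = b ^ (r+1) / (r+1) := by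
  have h := integral_rpow (a := 0) (b := b) (Or.inl hr)
  rw [intervalIntegral.integral_of_le hb] at h
  rw [← integral_Ioc_eq_integral_Ioo, h, Real.zero_rpow (by linarith), sub_zero]

lemma FG.integrableOn_sub_rpow {r : ℝ} (hr : -1 < r) (c : ℝ) {a b : ℝ} (hab : a ≤ b) :
    IntegrableOn (fun s : ℝ => (c - s) ^ r) (Ioo a b) volume := by
  have h := (intervalIntegral.intervalIntegrable_rpow' (a := c - b) (b := c - a) hr).comp_sub_left c
  simp only [sub_sub_cancel] at h
  rw [intervalIntegrable_iff, Set.uIoc_comm, uIoc_of_le hab] at h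
  exact h.mono_set Ioo_subset_Ioc_self

open intervalIntegral in
lemma FG.integral_sub_rpow_Ioo {r : ℝ} (hr : -1 < r) {a t : ℝ} (hat : a ≤ t) :
    ∫ s in Ioo a t, (t - s) ^ r = (t - a) ^ (r+1) / (r+1) := by
  have h : (∫ s in a..t, (t - s) ^ r) = ∫ x in (t - t)..(t - a), x ^ r :=
    integral_comp_sub_left (fun x : ℝ => x ^ r) t
  rw [sub_self, integral_rpow (Or.inl hr), Real.zero_rpow (by linarith), sub_zero] at h
  rw [intervalIntegral.integral_of_le hat] at h
  rw [← integral_Ioc_eq_integral_Ioo, h]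

lemma FG.kernel_meas (α β t : ℝ) :
    Measurable (fun s : ℝ => (t - s) ^ (-α) * s ^ (-β)) := by fun_prop

lemma FG.kernel_int {α β : ℝ} (hα0 : 0 ≤ α) (hα1 : α < 1) (hβ0 : 0 ≤ β) (hβ1 : β < 1)
    {t : ℝ} (ht : 0 < t) :
    IntegrableOn (fun s : ℝ => (t - s) ^ (-α) * s ^ (-β)) (Ioo 0 t) volume ∧
    ∫ s in Ioo (0:ℝ) t, (t - s) ^ (-α) * s ^ (-β) ≤
      (2/(1-α) + 2/(1-β)) * t ^ (1-α-β) := by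
  set g : ℝ → ℝ := fun s => (t - s) ^ (-α) * s ^ (-β) with hg
  have h2 : 0 < t/2 := by linarith
  have hmeas := FG.kernel_meas α β t
  have hgnn : ∀ s ∈ Ioo (0:ℝ) t, 0 ≤ g s := by
    intro s hs
    exact mul_nonneg (Real.rpow_nonneg (by linarith [hs.2]) _)
      (Real.rpow_nonneg hs.1.le _)
  -- piece 1
  have hb1 : -(1:ℝ) < -β := by linarith
  have hg1i : IntegrableOn (fun s : ℝ => (t/2) ^ (-α) * s ^ (-β)) (Ioo 0 (t/2)) volume :=
    (FG.integrableOn_rpow hb1 h2.le).const_mul _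
  have hle1 : ∀ s ∈ Ioo (0:ℝ) (t/2), g s ≤ (t/2) ^ (-α) * s ^ (-β) := by
    intro s hs
    refine mul_le_mul_of_nonneg_right ?_ (Real.rpow_nonneg hs.1.le _)
    exact Real.rpow_le_rpow_of_nonpos h2 (by linarith [hs.2]) (by linarith)
  have hi1 : IntegrableOn g (Ioo 0 (t/2)) volume := by
    refine Integrable.mono' hg1i hmeas.aestronglyMeasurable ?_
    rw [ae_restrict_iff' measurableSet_Ioo]
    filter_upwards with s hs
    rw [Real.norm_eq_abs, abs_of_nonneg (hgnn s ⟨hs.1, by linarith [hs.2]⟩)]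
    exact hle1 s hs
  have hI1 : ∫ s in Ioo (0:ℝ) (t/2), g s ≤ (t/2) ^ (-α) * ((t/2) ^ (-β+1) / (-β+1)) := by
    calc ∫ s in Ioo (0:ℝ) (t/2), g s
        ≤ ∫ s in Ioo (0:ℝ) (t/2), (t/2) ^ (-α) * s ^ (-β) :=
          setIntegral_mono_on hi1 hg1i measurableSet_Ioo hle1
      _ = (t/2) ^ (-α) * ∫ s in Ioo (0:ℝ) (t/2), s ^ (-β) := integral_const_mul _ _
      _ = (t/2) ^ (-α) * ((t/2) ^ (-β+1) / (-β+1)) := by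
          rw [FG.integral_rpow_Ioo hb1 h2.le]
  -- piece 2
  have ha1 : -(1:ℝ) < -α := by linarith
  have hg2i : IntegrableOn (fun s : ℝ => (t - s) ^ (-α) * (t/2) ^ (-β)) (Ioo (t/2) t) volume :=
    (FG.integrableOn_sub_rpow ha1 t (by linarith)).mul_const _
  have hle2 : ∀ s ∈ Ioo (t/2) t, g s ≤ (t - s) ^ (-α) * (t/2) ^ (-β) := by
    intro s hs
    refine mul_le_mul_of_nonneg_left ?_ (Real.rpow_nonneg (by linarith [hs.2]) _)
    exact Real.rpow_le_rpow_of_nonpos h2 hs.1.le (by linarith)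
  have hi2 : IntegrableOn g (Ioo (t/2) t) volume := by
    refine Integrable.mono' hg2i hmeas.aestronglyMeasurable ?_
    rw [ae_restrict_iff' measurableSet_Ioo]
    filter_upwards with s hs
    rw [Real.norm_eq_abs, abs_of_nonneg (hgnn s ⟨by linarith [hs.1], hs.2⟩)]
    exact hle2 s hs
  have hI2 : ∫ s in Ioo (t/2) t, g s ≤ ((t - t/2) ^ (-α+1) / (-α+1)) * (t/2) ^ (-β) := by
    calc ∫ s in Ioo (t/2) t, g s
        ≤ ∫ s in Ioo (t/2) t, (t - s) ^ (-α) * (t/2) ^ (-β) :=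
          setIntegral_mono_on hi2 hg2i measurableSet_Ioo hle2
      _ = (∫ s in Ioo (t/2) t, (t - s) ^ (-α)) * (t/2) ^ (-β) := integral_mul_const _ _
      _ = ((t - t/2) ^ (-α+1) / (-α+1)) * (t/2) ^ (-β) := by
          rw [FG.integral_sub_rpow_Ioo ha1 (by linarith)]
  -- combine
  have hsplit : Ioo (0:ℝ) t = Ioo 0 (t/2) ∪ Ico (t/2) t := by
    rw [Ioo_union_Ico_eq_Ioo h2 (by linarith)]
  have hi2' : IntegrableOn g (Ico (t/2) t) volume := by
    rwa [IntegrableOn, Measure.restrict_congr_set Ioo_ae_eq_Ico.symm]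
  have hint : IntegrableOn g (Ioo 0 t) volume := by
    rw [hsplit]; exact hi1.union hi2'
  refine ⟨hint, ?_⟩
  have hIeq : ∫ s in Ioo (0:ℝ) t, g s
      = (∫ s in Ioo (0:ℝ) (t/2), g s) + ∫ s in Ioo (t/2) t, g s := by
    have hdisj : Disjoint (Ioo (0:ℝ) (t/2)) (Ico (t/2) t) :=
      Ico_disjoint_Ico_same.mono Ioo_subset_Ico_self le_rfl
    have hIco : ∫ s in Ico (t/2) t, g s = ∫ s in Ioo (t/2) t, g s :=
      setIntegral_congr_set Ioo_ae_eq_Ico.symm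
    rw [hsplit, setIntegral_union hdisj measurableSet_Ico hi1 hi2', hIco]
  rw [hIeq]
  -- arithmetic
  have e1 : (t/2) ^ (-α) * ((t/2) ^ (-β+1) / (-β+1)) = (t/2) ^ (1-α-β) / (1-β) := by
    rw [← mul_div_assoc, ← Real.rpow_add h2, show -α + (-β+1) = 1-α-β by ring,
      show -β+1 = 1-β by ring]
  have e2 : ((t - t/2) ^ (-α+1) / (-α+1)) * (t/2) ^ (-β) = (t/2) ^ (1-α-β) / (1-α) := by
    rw [show t - t/2 = t/2 by ring, div_mul_eq_mul_div, ← Real.rpow_add h2,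
      show -α+1 + -β = 1-α-β by ring, show -α+1 = 1-α by ring]
  have e3 : (t/2) ^ (1-α-β) ≤ 2 * t ^ (1-α-β) := by
    have : (t/2 : ℝ) = t * 2⁻¹ := by ring
    rw [this, Real.mul_rpow ht.le (by norm_num), Real.inv_rpow (by norm_num),
      ← Real.rpow_neg (by norm_num)]
    rw [mul_comm]
    refine mul_le_mul_of_nonneg_right ?_ (Real.rpow_nonneg ht.le _)
    calc (2:ℝ) ^ (-(1-α-β)) ≤ (2:ℝ) ^ (1:ℝ) :=
          Real.rpow_le_rpow_of_exponent_le one_le_two (by linarith)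
      _ = 2 := Real.rpow_one 2
  have h1a : (0:ℝ) < 1 - α := by linarith
  have h1b : (0:ℝ) < 1 - β := by linarith
  calc (∫ s in Ioo (0:ℝ) (t/2), g s) + ∫ s in Ioo (t/2) t, g s
      ≤ (t/2) ^ (1-α-β) / (1-β) + (t/2) ^ (1-α-β) / (1-α) := by
        rw [← e1, ← e2]; exact add_le_add hI1 hI2
    _ ≤ 2 * t ^ (1-α-β) / (1-β) + 2 * t ^ (1-α-β) / (1-α) := by
        gcongr
    _ = (2/(1-α) + 2/(1-β)) * t ^ (1-α-β) := by ring

lemma FG.core0 {α β B T A : ℝ} (hα0 : 0 ≤ α) (hα1 : α < 1) (hβ0 : 0 ≤ β) (hβ1 : β < 1)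
    (hB : 0 < B) (hT : 0 < T)
    {u : ℝ → ℝ} (hnn : ∀ t ∈ Ioo (0:ℝ) T, 0 ≤ u t)
    {b M : ℝ} (hb : 0 < b) (hbT : b ≤ T) (hM : 0 ≤ M)
    (hmain : ∀ᵐ t ∂(volume.restrict (Ioo (0 : ℝ) T)),
        u t ≤ A * t ^ (-β) + B * ∫ s in Ioo (0 : ℝ) t, (t - s) ^ (-α) * u s)
    (hsM : ∀ᵐ s ∂(volume.restrict (Ioo (0:ℝ) b)), s ^ β * u s ≤ M) :
    ∀ᵐ t ∂(volume.restrict (Ioo (0:ℝ) b)),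
      t ^ β * u t ≤ A + B * ((2/(1-α) + 2/(1-β)) * b ^ (1-α) * M) := by
  have hmain' : ∀ᵐ t ∂(volume.restrict (Ioo (0:ℝ) b)),
      u t ≤ A * t ^ (-β) + B * ∫ s in Ioo (0 : ℝ) t, (t - s) ^ (-α) * u s :=
    ae_restrict_of_ae_restrict_of_subset (Ioo_subset_Ioo_right hbT) hmain
  have hsM' : ∀ᵐ s : ℝ ∂volume, s ∈ Ioo (0:ℝ) b → s ^ β * u s ≤ M :=
    (ae_restrict_iff' measurableSet_Ioo).mp hsM
  rw [ae_restrict_iff' measurableSet_Ioo] at hmain' ⊢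
  filter_upwards [hmain', hsM'] with t hmt _ ht
  have ht0 : 0 < t := ht.1
  have htb : t < b := ht.2
  set g : ℝ → ℝ := fun s => (t - s) ^ (-α) * s ^ (-β) with hgdef
  obtain ⟨hgint, hgval⟩ := FG.kernel_int hα0 hα1 hβ0 hβ1 ht0
  have hdom : ∀ᵐ s ∂(volume.restrict (Ioo (0:ℝ) t)),
      (t - s) ^ (-α) * u s ≤ M * g s := by
    rw [ae_restrict_iff' measurableSet_Ioo]
    filter_upwards [hsM'] with s hMs hs
    have hsb : s ∈ Ioo (0:ℝ) b := ⟨hs.1, lt_trans hs.2 htb⟩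
    have hus : u s ≤ M * s ^ (-β) := by
      have h1 : s ^ (-β) * (s ^ β * u s) ≤ s ^ (-β) * M :=
        mul_le_mul_of_nonneg_left (hMs hsb) (Real.rpow_nonneg hs.1.le _)
      rw [← mul_assoc, ← Real.rpow_add hs.1] at h1
      simpa [mul_comm] using h1
    calc (t - s) ^ (-α) * u s ≤ (t - s) ^ (-α) * (M * s ^ (-β)) :=
          mul_le_mul_of_nonneg_left hus (Real.rpow_nonneg (by linarith [hs.2] : (0:ℝ) ≤ t - s) _)
      _ = M * g s := by rw [hgdef]; ring
  have hnn' : ∀ᵐ s ∂(volume.restrict (Ioo (0:ℝ) t)), 0 ≤ (t - s) ^ (-α) * u s := by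
    rw [ae_restrict_iff' measurableSet_Ioo]
    filter_upwards with s hs
    have hsT : s ∈ Ioo (0:ℝ) T := ⟨hs.1, by linarith [hs.2, htb, hbT]⟩
    exact mul_nonneg (Real.rpow_nonneg (by linarith [hs.2]) _) (hnn s hsT)
  have hIb : (∫ s in Ioo (0:ℝ) t, (t - s) ^ (-α) * u s)
      ≤ M * ((2/(1-α) + 2/(1-β)) * t ^ (1-α-β)) := by
    calc (∫ s in Ioo (0:ℝ) t, (t - s) ^ (-α) * u s)
        ≤ ∫ s in Ioo (0:ℝ) t, M * g s :=
          integral_mono_of_nonneg hnn' (hgint.const_mul M) hdom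
      _ = M * ∫ s in Ioo (0:ℝ) t, g s := integral_const_mul _ _
      _ ≤ M * ((2/(1-α) + 2/(1-β)) * t ^ (1-α-β)) := mul_le_mul_of_nonneg_left hgval hM
  have htβ : (0:ℝ) ≤ t ^ β := Real.rpow_nonneg ht0.le β
  have e1 : t ^ β * t ^ (-β) = 1 := by
    rw [← Real.rpow_add ht0]; simp
  have e2 : t ^ β * t ^ (1-α-β) = t ^ (1-α) := by
    rw [← Real.rpow_add ht0]; congr 1; ring
  have hCab : (0:ℝ) ≤ 2/(1-α) + 2/(1-β) := by
    have : (0:ℝ) < 1 - α := by linarith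
    have : (0:ℝ) < 1 - β := by linarith
    positivity
  calc t ^ β * u t
      ≤ t ^ β * (A * t ^ (-β) + B * ∫ s in Ioo (0:ℝ) t, (t - s) ^ (-α) * u s) :=
        mul_le_mul_of_nonneg_left (hmt ht) htβ
    _ = A * (t ^ β * t ^ (-β))
        + B * (t ^ β * ∫ s in Ioo (0:ℝ) t, (t - s) ^ (-α) * u s) := by ring
    _ ≤ A * (t ^ β * t ^ (-β))
        + B * (t ^ β * (M * ((2/(1-α) + 2/(1-β)) * t ^ (1-α-β)))) := by
        gcongr
    _ = A + B * ((2/(1-α) + 2/(1-β)) * (t ^ β * t ^ (1-α-β)) * M) := by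
        rw [e1]; ring
    _ = A + B * ((2/(1-α) + 2/(1-β)) * t ^ (1-α) * M) := by rw [e2]
    _ ≤ A + B * ((2/(1-α) + 2/(1-β)) * b ^ (1-α) * M) := by
        have : t ^ (1-α) ≤ b ^ (1-α) :=
          Real.rpow_le_rpow ht0.le htb.le (by linarith)
        gcongr

lemma FG.core_step {α β B T A : ℝ} (hα0 : 0 ≤ α) (hα1 : α < 1) (hβ0 : 0 ≤ β) (hβ1 : β < 1)
    (hB : 0 < B) (hT : 0 < T)
    {u : ℝ → ℝ} (hnn : ∀ t ∈ Ioo (0:ℝ) T, 0 ≤ u t)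
    {a b C M : ℝ} (ha : 0 < a) (hab : a < b) (hbT : b ≤ T) (hC : 0 ≤ C) (hM : 0 ≤ M)
    (hmain : ∀ᵐ t ∂(volume.restrict (Ioo (0 : ℝ) T)),
        u t ≤ A * t ^ (-β) + B * ∫ s in Ioo (0 : ℝ) t, (t - s) ^ (-α) * u s)
    (hsC : ∀ᵐ s ∂(volume.restrict (Ioo (0:ℝ) a)), s ^ β * u s ≤ C)
    (hsM : ∀ᵐ s ∂(volume.restrict (Ioo (0:ℝ) b)), s ^ β * u s ≤ M) :
    ∀ᵐ t ∂(volume.restrict (Ioo a b)),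
      t ^ β * u t ≤ A + B * ((2/(1-α) + 2/(1-β)) * T ^ (1-α) * C)
        + B * (T ^ β * a ^ (-β) * ((b-a) ^ (1-α) / (1-α)) * M) := by
  have hmain' : ∀ᵐ t ∂(volume.restrict (Ioo a b)),
      u t ≤ A * t ^ (-β) + B * ∫ s in Ioo (0 : ℝ) t, (t - s) ^ (-α) * u s :=
    ae_restrict_of_ae_restrict_of_subset (Ioo_subset_Ioo ha.le hbT) hmain
  have hsC' : ∀ᵐ s : ℝ ∂volume, s ∈ Ioo (0:ℝ) a → s ^ β * u s ≤ C :=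
    (ae_restrict_iff' measurableSet_Ioo).mp hsC
  have hsM' : ∀ᵐ s : ℝ ∂volume, s ∈ Ioo (0:ℝ) b → s ^ β * u s ≤ M :=
    (ae_restrict_iff' measurableSet_Ioo).mp hsM
  rw [ae_restrict_iff' measurableSet_Ioo] at hmain' ⊢
  filter_upwards [hmain'] with t hmt ht
  have hat : a < t := ht.1
  have ht0 : 0 < t := lt_trans ha hat
  have htb : t < b := ht.2
  have htT : t ≤ T := le_of_lt (lt_of_lt_of_le htb hbT)
  set g : ℝ → ℝ := fun s => (t - s) ^ (-α) * s ^ (-β) with hgdef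
  obtain ⟨hgint, hgval⟩ := FG.kernel_int hα0 hα1 hβ0 hβ1 ht0
  set D : ℝ := M * a ^ (-β) with hDdef
  have hD : 0 ≤ D := mul_nonneg hM (Real.rpow_nonneg ha.le _)
  set h : ℝ → ℝ := fun s => if s < a then C * g s else D * (t - s) ^ (-α) with hhdef
  -- domination
  have hdom : ∀ᵐ s ∂(volume.restrict (Ioo (0:ℝ) t)),
      (t - s) ^ (-α) * u s ≤ h s := by
    rw [ae_restrict_iff' measurableSet_Ioo]
    filter_upwards [hsC', hsM'] with s hCs hMs hs
    have hts : (0:ℝ) ≤ t - s := by linarith [hs.2]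
    by_cases hsa : s < a
    · have hfs : s ^ β * u s ≤ C := hCs ⟨hs.1, hsa⟩
      have hus : u s ≤ C * s ^ (-β) := by
        have h1 : s ^ (-β) * (s ^ β * u s) ≤ s ^ (-β) * C :=
          mul_le_mul_of_nonneg_left hfs (Real.rpow_nonneg hs.1.le _)
        rw [← mul_assoc, ← Real.rpow_add hs.1] at h1
        simpa [mul_comm] using h1
      have : (t - s) ^ (-α) * u s ≤ (t - s) ^ (-α) * (C * s ^ (-β)) :=
        mul_le_mul_of_nonneg_left hus (Real.rpow_nonneg hts _)
      rw [hhdef]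
      simp only [if_pos hsa]
      calc (t - s) ^ (-α) * u s ≤ (t - s) ^ (-α) * (C * s ^ (-β)) := this
        _ = C * g s := by rw [hgdef]; ring
    · have hfs : s ^ β * u s ≤ M := hMs ⟨hs.1, lt_trans hs.2 htb⟩
      have hus : u s ≤ M * s ^ (-β) := by
        have h1 : s ^ (-β) * (s ^ β * u s) ≤ s ^ (-β) * M :=
          mul_le_mul_of_nonneg_left hfs (Real.rpow_nonneg hs.1.le _)
        rw [← mul_assoc, ← Real.rpow_add hs.1] at h1
        simpa [mul_comm] using h1
      have hsa' : a ≤ s := not_lt.mp hsa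
      have hus2 : u s ≤ D := by
        refine le_trans hus ?_
        rw [hDdef]
        exact mul_le_mul_of_nonneg_left
          (Real.rpow_le_rpow_of_nonpos ha hsa' (neg_nonpos.mpr hβ0)) hM
      rw [hhdef]
      simp only [if_neg hsa]
      calc (t - s) ^ (-α) * u s ≤ (t - s) ^ (-α) * D :=
            mul_le_mul_of_nonneg_left hus2 (Real.rpow_nonneg hts _)
        _ = D * (t - s) ^ (-α) := mul_comm _ _
  -- nonnegativity
  have hnn' : ∀ᵐ s ∂(volume.restrict (Ioo (0:ℝ) t)), 0 ≤ (t - s) ^ (-α) * u s := by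
    rw [ae_restrict_iff' measurableSet_Ioo]
    filter_upwards with s hs
    have hsT : s ∈ Ioo (0:ℝ) T := ⟨hs.1, lt_of_lt_of_le hs.2 htT⟩
    exact mul_nonneg (Real.rpow_nonneg (by linarith [hs.2]) _) (hnn s hsT)
  -- integrability of h
  have hsub1 : Ioo (0:ℝ) a ⊆ Ioo (0:ℝ) t := Ioo_subset_Ioo_right hat.le
  have hI1 : IntegrableOn h (Ioo (0:ℝ) a) volume := by
    refine IntegrableOn.congr_fun ((hgint.mono_set hsub1).const_mul C)
      (fun s hs => ?_) measurableSet_Ioo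
    rw [hhdef]; simp only [if_pos hs.2]; rfl
  have hI2 : IntegrableOn h (Ico a t) volume := by
    have hbase : IntegrableOn (fun s : ℝ => D * (t - s) ^ (-α)) (Ico a t) volume := by
      rw [IntegrableOn, ← Measure.restrict_congr_set Ioo_ae_eq_Ico]
      exact (FG.integrableOn_sub_rpow (by linarith : (-1:ℝ) < -α) t hat.le).const_mul D
    refine IntegrableOn.congr_fun hbase (fun s hs => ?_) measurableSet_Ico
    rw [hhdef]; simp only [if_neg (not_lt.mpr hs.1)]
  have hsplit : Ioo (0:ℝ) t = Ioo 0 a ∪ Ico a t := by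
    rw [Ioo_union_Ico_eq_Ioo ha hat.le]
  have hIh : IntegrableOn h (Ioo (0:ℝ) t) volume := by
    rw [hsplit]; exact hI1.union hI2
  -- value of ∫ h
  have hgnn : ∀ᵐ s ∂(volume.restrict (Ioo (0:ℝ) t)), 0 ≤ g s := by
    rw [ae_restrict_iff' measurableSet_Ioo]
    filter_upwards with s hs
    exact mul_nonneg (Real.rpow_nonneg (by linarith [hs.2]) _) (Real.rpow_nonneg hs.1.le _)
  have hval1 : ∫ s in Ioo (0:ℝ) a, h s ≤ C * ((2/(1-α) + 2/(1-β)) * t ^ (1-α-β)) := by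
    have e : ∫ s in Ioo (0:ℝ) a, h s = C * ∫ s in Ioo (0:ℝ) a, g s := by
      rw [← integral_const_mul]
      refine setIntegral_congr_fun measurableSet_Ioo fun s hs => ?_
      rw [hhdef]; simp only [if_pos hs.2]
    rw [e]
    refine le_trans (mul_le_mul_of_nonneg_left ?_ hC)
      (mul_le_mul_of_nonneg_left hgval hC)
    exact setIntegral_mono_set hgint hgnn (HasSubset.Subset.eventuallyLE hsub1)
  have hval2 : ∫ s in Ico a t, h s ≤ D * ((b-a) ^ (1-α) / (1-α)) := by
    have e0 : ∫ s in Ico a t, h s = ∫ s in Ioo a t, h s :=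
      setIntegral_congr_set Ioo_ae_eq_Ico.symm
    have e1 : ∫ s in Ioo a t, h s = D * ∫ s in Ioo a t, (t - s) ^ (-α) := by
      rw [← integral_const_mul]
      refine setIntegral_congr_fun measurableSet_Ioo fun s hs => ?_
      rw [hhdef]; simp only [if_neg (not_lt.mpr hs.1.le)]
    have e2 : ∫ s in Ioo a t, (t - s) ^ (-α) = (t - a) ^ (1-α) / (1-α) := by
      rw [FG.integral_sub_rpow_Ioo (by linarith : (-1:ℝ) < -α) hat.le,
        show -α + 1 = 1 - α by ring]
    have e3 : (t - a) ^ (1-α) ≤ (b - a) ^ (1-α) :=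
      Real.rpow_le_rpow (by linarith) (by linarith) (by linarith)
    rw [e0, e1, e2]
    refine mul_le_mul_of_nonneg_left ?_ hD
    exact div_le_div_of_nonneg_right e3 (by linarith) |>.trans_eq rfl
  -- bound on the main integral
  have hIb : (∫ s in Ioo (0:ℝ) t, (t - s) ^ (-α) * u s)
      ≤ C * ((2/(1-α) + 2/(1-β)) * t ^ (1-α-β)) + D * ((b-a) ^ (1-α) / (1-α)) := by
    calc (∫ s in Ioo (0:ℝ) t, (t - s) ^ (-α) * u s)
        ≤ ∫ s in Ioo (0:ℝ) t, h s := integral_mono_of_nonneg hnn' hIh hdom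
      _ = (∫ s in Ioo (0:ℝ) a, h s) + ∫ s in Ico a t, h s := by
          rw [hsplit]
          exact setIntegral_union (Ico_disjoint_Ico_same.mono Ioo_subset_Ico_self le_rfl)
            measurableSet_Ico hI1 hI2
      _ ≤ _ := add_le_add hval1 hval2
  -- final chain
  have htβ : (0:ℝ) ≤ t ^ β := Real.rpow_nonneg ht0.le β
  have e1 : t ^ β * t ^ (-β) = 1 := by rw [← Real.rpow_add ht0]; simp
  have e2 : t ^ β * t ^ (1-α-β) = t ^ (1-α) := by
    rw [← Real.rpow_add ht0]; congr 1; ring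
  have hCab : (0:ℝ) ≤ 2/(1-α) + 2/(1-β) := by
    have h1 : (0:ℝ) < 1 - α := by linarith
    have h2 : (0:ℝ) < 1 - β := by linarith
    positivity
  have htT1 : t ^ (1-α) ≤ T ^ (1-α) := Real.rpow_le_rpow ht0.le htT (by linarith)
  have htTβ : t ^ β ≤ T ^ β := Real.rpow_le_rpow ht0.le htT hβ0
  have hba : (0:ℝ) ≤ (b-a) ^ (1-α) / (1-α) := by
    have h1 : (0:ℝ) < 1 - α := by linarith
    have h2 : (0:ℝ) ≤ b - a := by linarith
    exact div_nonneg (Real.rpow_nonneg h2 _) h1.le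
  calc t ^ β * u t
      ≤ t ^ β * (A * t ^ (-β) + B * ∫ s in Ioo (0:ℝ) t, (t - s) ^ (-α) * u s) :=
        mul_le_mul_of_nonneg_left (hmt ht) htβ
    _ = A * (t ^ β * t ^ (-β))
        + B * (t ^ β * ∫ s in Ioo (0:ℝ) t, (t - s) ^ (-α) * u s) := by ring
    _ ≤ A * (t ^ β * t ^ (-β))
        + B * (t ^ β * (C * ((2/(1-α) + 2/(1-β)) * t ^ (1-α-β)))
            + t ^ β * (D * ((b-a) ^ (1-α) / (1-α)))) := by
        have hmul := mul_le_mul_of_nonneg_left hIb htβ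
        rw [mul_add] at hmul
        gcongr
    _ = A + (B * ((2/(1-α) + 2/(1-β)) * (t ^ β * t ^ (1-α-β)) * C)
        + B * (t ^ β * a ^ (-β) * ((b-a) ^ (1-α) / (1-α)) * M)) := by
        rw [e1, hDdef]; ring
    _ ≤ A + (B * ((2/(1-α) + 2/(1-β)) * T ^ (1-α) * C)
        + B * (T ^ β * a ^ (-β) * ((b-a) ^ (1-α) / (1-α)) * M)) := by
        rw [e2]
        have hanb : (0:ℝ) ≤ a ^ (-β) := Real.rpow_nonneg ha.le _
        gcongr
    _ = A + B * ((2/(1-α) + 2/(1-β)) * T ^ (1-α) * C)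
        + B * (T ^ β * a ^ (-β) * ((b-a) ^ (1-α) / (1-α)) * M) := by ring

set_option maxHeartbeats 2000000 in
/-- Qualitative fractional Grönwall inequality: if
`u(t) ≤ A t^{-β} + B ∫₀ᵗ (t-s)^{-α} u(s) ds` a.e. on `(0,T)`, with `α, β ∈ [0,1)`,
then `u(t) ≤ c A t^{-β}` a.e., with `c` depending only on `α, β, B, T`. -/
theorem fractional_gronwall
    (α β B T : ℝ) (hα : α ∈ Ico (0 : ℝ) 1) (hβ : β ∈ Ico (0 : ℝ) 1)
    (hB : 0 < B) (hT : 0 < T) :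
    ∃ c > (0 : ℝ), ∀ (A : ℝ), 0 < A → ∀ u : ℝ → ℝ, Measurable u →
      (∀ t ∈ Ioo (0 : ℝ) T, 0 ≤ u t) →
      (∀ t₀ ∈ Ioo (0 : ℝ) T, ∃ K : ℝ, ∀ t ∈ Ioc (0 : ℝ) t₀, t ^ β * u t ≤ K) →
      (∀ᵐ t ∂(volume.restrict (Ioo (0 : ℝ) T)),
        u t ≤ A * t ^ (-β) + B * ∫ s in Ioo (0 : ℝ) t, (t - s) ^ (-α) * u s) →
      ∀ᵐ t ∂(volume.restrict (Ioo (0 : ℝ) T)), u t ≤ c * A * t ^ (-β) := by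
  obtain ⟨hα0, hα1⟩ := hα
  obtain ⟨hβ0, hβ1⟩ := hβ
  have h1a : (0:ℝ) < 1 - α := by linarith
  have h1b : (0:ℝ) < 1 - β := by linarith
  set Cab : ℝ := 2/(1-α) + 2/(1-β) with hCabdef
  have hCab : 0 < Cab := by positivity
  -- choice of δ
  set x1 : ℝ := 1/(2*B*Cab) with hx1def
  have hx1 : 0 < x1 := by positivity
  set δ : ℝ := min (T/2) (x1 ^ ((1-α)⁻¹)) with hδdef
  have hδpos : 0 < δ := lt_min (by linarith) (Real.rpow_pos_of_pos hx1 _)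
  have hδT : δ < T := lt_of_le_of_lt (min_le_left _ _) (by linarith)
  have hδcond : B * Cab * δ ^ (1-α) ≤ 1/2 := by
    have h1 : δ ^ (1-α) ≤ x1 := by
      calc δ ^ (1-α) ≤ (x1 ^ ((1-α)⁻¹)) ^ (1-α) :=
            Real.rpow_le_rpow hδpos.le (min_le_right _ _) h1a.le
        _ = x1 := by
            rw [← Real.rpow_mul hx1.le, inv_mul_cancel₀ (ne_of_gt h1a), Real.rpow_one]
    calc B * Cab * δ ^ (1-α) ≤ B * Cab * x1 := by
          exact mul_le_mul_of_nonneg_left h1 (by positivity)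
      _ = 1/2 := by rw [hx1def]; field_simp
  -- choice of δ'
  set P : ℝ := B * T ^ β * δ ^ (-β) / (1-α) with hPdef
  have hP : 0 < P := by
    have := Real.rpow_pos_of_pos hT β
    have := Real.rpow_pos_of_pos hδpos (-β)
    positivity
  set x2 : ℝ := 1/(2*P) with hx2def
  have hx2 : 0 < x2 := by positivity
  set δ' : ℝ := min δ (x2 ^ ((1-α)⁻¹)) with hδ'def
  have hδ'pos : 0 < δ' := lt_min hδpos (Real.rpow_pos_of_pos hx2 _)
  have hδ'cond : P * δ' ^ (1-α) ≤ 1/2 := by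
    have h1 : δ' ^ (1-α) ≤ x2 := by
      calc δ' ^ (1-α) ≤ (x2 ^ ((1-α)⁻¹)) ^ (1-α) :=
            Real.rpow_le_rpow hδ'pos.le (min_le_right _ _) h1a.le
        _ = x2 := by
            rw [← Real.rpow_mul hx2.le, inv_mul_cancel₀ (ne_of_gt h1a), Real.rpow_one]
    calc P * δ' ^ (1-α) ≤ P * x2 := mul_le_mul_of_nonneg_left h1 hP.le
      _ = 1/2 := by rw [hx2def]; field_simp
  -- the geometric constants
  set E : ℝ := B * Cab * T ^ (1-α) with hEdef
  have hE : 0 ≤ E := by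
    have := Real.rpow_pos_of_pos hT (1-α)
    positivity
  set c : ℕ → ℝ := fun k => Nat.rec (2:ℝ) (fun _ ck => 2 + 2*(1+E)*ck) k with hcdef
  have hc0 : c 0 = 2 := rfl
  have hcs : ∀ k, c (k+1) = 2 + 2*(1+E)*c k := fun k => rfl
  have hcpos : ∀ k, 0 < c k := by
    intro k; induction k with
    | zero => rw [hc0]; norm_num
    | succ k ih => rw [hcs]; nlinarith
  have hcmono : ∀ k, c k ≤ c (k+1) := by
    intro k; rw [hcs]; nlinarith [hcpos k]
  clear_value x1 x2 P E
  obtain ⟨n, hn⟩ := exists_nat_gt (T / δ')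
  have hnT : T ≤ δ + n * δ' := by
    have : T < n * δ' := by
      rw [div_lt_iff₀ hδ'pos] at hn; linarith
    linarith
  refine ⟨c n, hcpos n, ?_⟩
  intro A hA u hu hnn hK hmain
  -- main claim for each w < T
  have claim : ∀ w ∈ Ioo (0:ℝ) T,
      ∀ᵐ t ∂(volume.restrict (Ioo (0:ℝ) w)), t ^ β * u t ≤ c n * A := by
    intro w hw
    set N : ℝ → ENNReal :=
      fun r => essSup (fun s => ENNReal.ofReal (s ^ β * u s)) (volume.restrict (Ioo 0 r))
      with hNdef
    have hNmono : ∀ {r r' : ℝ}, r ≤ r' → N r ≤ N r' := by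
      intro r r' h
      exact essSup_mono_measure' (Measure.restrict_mono (Ioo_subset_Ioo_right h) le_rfl)
    have hNwfin : N w < ⊤ := by
      obtain ⟨K, hKw⟩ := hK w hw
      have : N w ≤ ENNReal.ofReal (max K 0) := by
        refine essSup_le_of_ae_le _ ?_
        have hh : ∀ᵐ s ∂(volume.restrict (Ioo (0:ℝ) w)),
            ENNReal.ofReal (s ^ β * u s) ≤ ENNReal.ofReal (max K 0) := by
          rw [ae_restrict_iff' measurableSet_Ioo]
          filter_upwards with s hs
          exact ENNReal.ofReal_le_ofReal
            (le_max_of_le_left (hKw s ⟨hs.1, hs.2.le⟩))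
        exact hh
      exact lt_of_le_of_lt this ENNReal.ofReal_lt_top
    have hfin : ∀ r, r ≤ w → N r ≠ ⊤ := fun r hr => ((hNmono hr).trans_lt hNwfin).ne
    have hub : ∀ r, r ≤ w → ∀ᵐ s ∂(volume.restrict (Ioo (0:ℝ) r)),
        s ^ β * u s ≤ (N r).toReal := by
      intro r hrw
      have h1 := ENNReal.ae_le_essSup (μ := volume.restrict (Ioo (0:ℝ) r))
        (f := fun s => ENNReal.ofReal (s ^ β * u s))
      filter_upwards [h1, ae_restrict_mem measurableSet_Ioo] with s h1s hs
      have hsT : s ∈ Ioo (0:ℝ) T := ⟨hs.1, lt_of_lt_of_le hs.2 (le_of_lt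
        (lt_of_le_of_lt hrw hw.2))⟩
      have hfs0 : 0 ≤ s ^ β * u s :=
        mul_nonneg (Real.rpow_nonneg hs.1.le _) (hnn s hsT)
      calc s ^ β * u s = (ENNReal.ofReal (s ^ β * u s)).toReal :=
            (ENNReal.toReal_ofReal hfs0).symm
        _ ≤ (N r).toReal := ENNReal.toReal_mono (hfin r hrw) h1s
    have hNle : ∀ r x, 0 ≤ x → r ≤ w →
        (∀ᵐ s ∂(volume.restrict (Ioo (0:ℝ) r)), s ^ β * u s ≤ x) →
        (N r).toReal ≤ x := by
      intro r x hx _ hax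
      have : N r ≤ ENNReal.ofReal x :=
        essSup_le_of_ae_le _ (hax.mono fun s hs => ENNReal.ofReal_le_ofReal hs)
      exact ENNReal.toReal_le_of_le_ofReal hx this
    set Tk : ℕ → ℝ := fun k => min (δ + k * δ') w with hTkdef
    have hTkw : ∀ k, Tk k ≤ w := fun k => min_le_right _ _
    have hTkT : ∀ k, Tk k ≤ T := fun k => le_of_lt (lt_of_le_of_lt (hTkw k) hw.2)
    have hTkpos : ∀ k, 0 < Tk k := by
      intro k
      exact lt_min (add_pos_of_pos_of_nonneg hδpos
        (mul_nonneg (Nat.cast_nonneg k) hδ'pos.le)) hw.1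
    have key : ∀ k, (N (Tk k)).toReal ≤ c k * A := by
      intro k; induction k with
      | zero =>
        have hTk0δ : Tk 0 ≤ δ := by
          rw [hTkdef]; simp
        set M := (N (Tk 0)).toReal with hMdef
        have hM0 : 0 ≤ M := ENNReal.toReal_nonneg
        have hcore := FG.core0 hα0 hα1 hβ0 hβ1 hB hT hnn (hTkpos 0) (hTkT 0) hM0
          hmain (hub _ (hTkw 0))
        have hcoef : B * (Cab * (Tk 0) ^ (1-α) * M) ≤ (1/2) * M := by
          have h1 : (Tk 0) ^ (1-α) ≤ δ ^ (1-α) :=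
            Real.rpow_le_rpow (hTkpos 0).le hTk0δ h1a.le
          calc B * (Cab * (Tk 0) ^ (1-α) * M) = (B * Cab * (Tk 0) ^ (1-α)) * M := by ring
            _ ≤ (1/2) * M := by
                refine mul_le_mul_of_nonneg_right (le_trans ?_ hδcond) hM0
                exact mul_le_mul_of_nonneg_left h1 (by positivity)
        have hae : ∀ᵐ t ∂(volume.restrict (Ioo (0:ℝ) (Tk 0))),
            t ^ β * u t ≤ A + (1/2) * M := by
          filter_upwards [hcore] with t hct
          exact hct.trans (by linarith)
        have := hNle (Tk 0) (A + (1/2)*M) (by linarith) (hTkw 0) hae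
        rw [hc0]
        linarith [this]
      | succ k ih =>
        by_cases hcase : w ≤ δ + (k:ℝ) * δ'
        · have he1 : Tk k = w := min_eq_right hcase
          have he2 : Tk (k+1) = w := by
            refine min_eq_right (le_trans hcase ?_)
            push_cast; nlinarith
          rw [he2, ← he1]
          exact ih.trans (mul_le_mul_of_nonneg_right (hcmono k) hA.le)
        · push_neg at hcase
          set a : ℝ := δ + (k:ℝ) * δ' with hadef
          have ha_eq : Tk k = a := min_eq_left hcase.le
          have ha0 : 0 < a :=
            add_pos_of_pos_of_nonneg hδpos (mul_nonneg (Nat.cast_nonneg k) hδ'pos.le)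
          have haδ : δ ≤ a := by
            rw [hadef]
            exact le_add_of_nonneg_right (mul_nonneg (Nat.cast_nonneg k) hδ'pos.le)
          have haw : a < w := hcase
          set b : ℝ := Tk (k+1) with hbdef
          have hab : a < b := by
            refine lt_min ?_ haw
            rw [hadef]; push_cast; linarith
          have hble : b ≤ δ + ((k:ℝ)+1) * δ' := by
            rw [hbdef, hTkdef]; push_cast; exact min_le_left _ _
          have hba : b - a ≤ δ' := by
            have := hble
            rw [hadef] at *
            push_cast at *
            linarith
          have hbw : b ≤ w := hTkw (k+1)
          have hbT : b ≤ T := hTkT (k+1)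
          set M := (N b).toReal with hMdef
          have hM0 : 0 ≤ M := ENNReal.toReal_nonneg
          have hCk : 0 ≤ c k * A := le_of_lt (mul_pos (hcpos k) hA)
          have hsC : ∀ᵐ s ∂(volume.restrict (Ioo (0:ℝ) a)), s ^ β * u s ≤ c k * A := by
            filter_upwards [hub a haw.le] with s hs
            exact hs.trans (ha_eq ▸ ih)
          have hsM := hub b hbw
          have hcore := FG.core_step hα0 hα1 hβ0 hβ1 hB hT hnn ha0 hab hbT hCk hM0
            hmain hsC hsM
          have hcoef : B * (T ^ β * a ^ (-β) * ((b-a) ^ (1-α) / (1-α)) * M)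
              ≤ (1/2) * M := by
            have h1 : a ^ (-β) ≤ δ ^ (-β) :=
              Real.rpow_le_rpow_of_nonpos hδpos haδ (neg_nonpos.mpr hβ0)
            have h2 : (b-a) ^ (1-α) ≤ δ' ^ (1-α) :=
              Real.rpow_le_rpow (by linarith) hba h1a.le
            have h3 : B * (T ^ β * a ^ (-β) * ((b-a) ^ (1-α) / (1-α)))
                ≤ P * δ' ^ (1-α) := by
              rw [hPdef]
              have hTβ : (0:ℝ) ≤ T ^ β := Real.rpow_nonneg hT.le _
              have hδβ : (0:ℝ) ≤ δ ^ (-β) := Real.rpow_nonneg hδpos.le _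
              have haβ : (0:ℝ) ≤ a ^ (-β) := Real.rpow_nonneg ha0.le _
              have hban : (0:ℝ) ≤ (b-a) ^ (1-α) := Real.rpow_nonneg (by linarith) _
              calc B * (T ^ β * a ^ (-β) * ((b-a) ^ (1-α) / (1-α)))
                  ≤ B * (T ^ β * δ ^ (-β) * (δ' ^ (1-α) / (1-α))) := by
                    gcongr
                _ = B * T ^ β * δ ^ (-β) / (1-α) * δ' ^ (1-α) := by ring
            calc B * (T ^ β * a ^ (-β) * ((b-a) ^ (1-α) / (1-α)) * M)
                = (B * (T ^ β * a ^ (-β) * ((b-a) ^ (1-α) / (1-α)))) * M := by ring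
              _ ≤ (1/2) * M := by
                  refine mul_le_mul_of_nonneg_right (h3.trans hδ'cond) hM0
          -- combine bounds on (0,a) and (a,b)
          set R : ℝ := A + (1+E) * (c k * A) + (1/2) * M with hRdef
          have hprodnn : 0 ≤ (1+E) * (c k * A) := mul_nonneg (by linarith) hCk
          have hR0 : 0 ≤ R := by rw [hRdef]; linarith
          have haeb : ∀ᵐ s ∂(volume.restrict (Ioo (0:ℝ) b)), s ^ β * u s ≤ R := by
            have hg1 := (ae_restrict_iff' measurableSet_Ioo).mp hsC
            have hg2 := (ae_restrict_iff' measurableSet_Ioo).mp hcore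
            have hne : ∀ᵐ s : ℝ ∂volume, s ≠ a := by
              rw [ae_iff]
              simpa using measure_singleton a
            rw [ae_restrict_iff' measurableSet_Ioo]
            filter_upwards [hg1, hg2, hne] with s h1 h2 h3 hs
            rcases lt_or_gt_of_ne h3 with hlt | hgt
            · have h1' := h1 ⟨hs.1, hlt⟩
              rw [hRdef]
              have hck : c k * A ≤ (1+E) * (c k * A) :=
                le_mul_of_one_le_left hCk (by linarith)
              linarith
            · have h2' := h2 ⟨hgt, hs.2⟩
              have hEc : B * (Cab * T ^ (1-α) * (c k * A)) = E * (c k * A) := by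
                rw [hEdef]; ring
              rw [hEc] at h2'
              rw [hRdef]
              linarith [hcoef, hCk]
          have hMR := hNle b R hR0 hbw haeb
          rw [hcs]
          rw [hRdef] at hMR
          rw [hMdef] at hMR
          have hexp : (2 + 2*(1+E)*c k) * A = 2*A + 2*((1+E)*(c k * A)) := by ring
          rw [hexp]
          linarith
    -- conclude for w
    have hTnw : Tk n = w := by
      rw [hTkdef]
      exact min_eq_right (le_trans hw.2.le hnT)
    have hfinal : (N w).toReal ≤ c n * A := by
      have hkn := key n
      rw [hTnw] at hkn
      exact hkn
    filter_upwards [hub w le_rfl] with t ht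
    exact ht.trans hfinal
  -- glue over w → T
  have hUnion : Ioo (0:ℝ) T = ⋃ j : ℕ, Ioo 0 (T - T/(j+2)) := by
    ext t
    simp only [mem_iUnion, mem_Ioo]
    constructor
    · rintro ⟨ht0, htT⟩
      obtain ⟨j, hj⟩ := exists_nat_gt (T / (T - t))
      refine ⟨j, ht0, ?_⟩
      have hTt : 0 < T - t := by linarith
      have hdiv : 0 < T / (T - t) := by positivity
      have : T / ((j:ℝ)+2) < T / (T / (T - t)) := by
        apply div_lt_div_of_pos_left hT hdiv
        linarith
      have heq : T / (T / (T - t)) = T - t := by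
        rw [div_div_eq_mul_div, mul_comm, mul_div_assoc, div_self (ne_of_gt hT), mul_one]
      rw [heq] at this
      linarith
    · rintro ⟨j, ht0, htj⟩
      have : T / ((j:ℝ)+2) ≥ 0 := by positivity
      exact ⟨ht0, by linarith⟩
  rw [hUnion, ae_restrict_iUnion_iff]
  intro j
  have hwj : T - T/((j:ℝ)+2) ∈ Ioo (0:ℝ) T := by
    constructor
    · have : T/((j:ℝ)+2) < T := div_lt_self hT (by have := Nat.cast_nonneg (α:=ℝ) j; linarith)
      linarith
    · have : (0:ℝ) < T/((j:ℝ)+2) := by positivity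
      linarith
  filter_upwards [claim _ hwj, ae_restrict_mem measurableSet_Ioo] with t hft ht
  have ht0 : 0 < t := ht.1
  have e1 : t ^ (-β) * (t ^ β * u t) = u t := by
    rw [← mul_assoc, ← Real.rpow_add ht0]
    simp
  calc u t = t ^ (-β) * (t ^ β * u t) := e1.symm
    _ ≤ t ^ (-β) * (c n * A) :=
        mul_le_mul_of_nonneg_left hft (Real.rpow_nonneg ht0.le _)
    _ = c n * A * t ^ (-β) := by ring
end
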